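/- Let F ⊆ V×V be a loop-free arc set with |F| ≤ k such that (G△F, σ) is a BMG. Then G△F contains no arc between a vertex of X_i and a vertex of X_j for any i ≠ j (in either direction). -/

import Mathlib

/-- A rooted phylogenetic tree with leaf set `V`, encoded by its hierarchy of clusters
(the cluster of a vertex is the set of leaves below it; inner vertices of a phylogenetic
tree have at least two children, so vertices correspond bijectively to clusters). -/
structure PhyloTree (V : Type*) where
  clusters : Set (Set V)
  nonempty_of_mem : ∀ A ∈ clusters, A.Nonempty
  univ_mem : Set.univ ∈ clusters
  singleton_mem : ∀ v : V, {v} ∈ clusters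
  nested : ∀ A ∈ clusters, ∀ B ∈ clusters, A ⊆ B ∨ B ⊆ A ∨ Disjoint A B

namespace PhyloTree

variable {V : Type*}

/-- The cluster of the last common ancestor of `x` and `y`: the smallest cluster
containing both (the clusters containing `x` and `y` form a chain, so their
intersection is the smallest one). -/
def lca (T : PhyloTree V) (x y : V) : Set V :=
  ⋂₀ {A | A ∈ T.clusters ∧ x ∈ A ∧ y ∈ A}

/-- The rooted triple `xy|z` (on three pairwise distinct leaves) is displayed by `T`:
`lca(x,y) ≺ lca(x,z) = lca(y,z)`. -/
def Displays (T : PhyloTree V) (x y z : V) : Prop :=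
  x ≠ y ∧ x ≠ z ∧ y ≠ z ∧ T.lca x y ⊂ T.lca x z ∧ T.lca x z = T.lca y z

/-- `T` displays every triple of `R`; a triple `(x, y, z)` encodes `xy|z`. -/
def DisplaysSet (T : PhyloTree V) (R : Set (V × V × V)) : Prop :=
  ∀ t ∈ R, T.Displays t.1 t.2.1 t.2.2

/-- `r(T)`, the set of triples displayed by `T`. -/
def triples (T : PhyloTree V) : Set (V × V × V) :=
  {t | T.Displays t.1 t.2.1 t.2.2}

/-- `T` is binary: every inner vertex (cluster with at least two leaves) has exactly
two children, i.e. splits into two disjoint proper subclusters. -/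
def IsBinary (T : PhyloTree V) : Prop :=
  ∀ A ∈ T.clusters, 1 < A.ncard →
    ∃ B ∈ T.clusters, ∃ D ∈ T.clusters,
      Disjoint B D ∧ B ∪ D = A ∧ B ⊂ A ∧ D ⊂ A

/-- `T'` is a refinement of `T`: they have the same leaf set and `T` is obtained from
`T'` by contracting inner edges, i.e. every cluster of `T` is a cluster of `T'`. -/
def Refines (T' T : PhyloTree V) : Prop :=
  T.clusters ⊆ T'.clusters

end PhyloTree

section BMG

variable {V C : Type*}

/-- `y` is a best match of `x` in the leaf-colored tree `(T,σ)`. -/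
def bestMatch (T : PhyloTree V) (σ : V → C) (x y : V) : Prop :=
  σ x ≠ σ y ∧ ∀ y' : V, σ y' = σ y → T.lca x y ⊆ T.lca x y'

/-- The leaf-colored tree `(T,σ)` explains the vertex-colored digraph `(E,σ)`,
i.e. `(E,σ)` is the best match graph of `(T,σ)`. -/
def Explains (T : PhyloTree V) (σ : V → C) (E : V → V → Prop) : Prop :=
  ∀ x y, E x y ↔ bestMatch T σ x y

/-- `(E,σ)` is a best match graph. -/
def IsBMG (E : V → V → Prop) (σ : V → C) : Prop :=
  ∃ T : PhyloTree V, Explains T σ E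

/-- `(E,σ)` is binary-explainable. -/
def BinaryExplainable (E : V → V → Prop) (σ : V → C) : Prop :=
  ∃ T : PhyloTree V, T.IsBinary ∧ Explains T σ E

/-- The informative triples `R(G,σ)`: `(a,b,b')` encodes `ab|b'`. -/
def informativeTriples (E : V → V → Prop) (σ : V → C) : Set (V × V × V) :=
  {t | σ t.1 ≠ σ t.2.1 ∧ σ t.2.1 = σ t.2.2 ∧ E t.1 t.2.1 ∧ ¬ E t.1 t.2.2}

/-- The forbidden triples `F(G,σ)`: `(a,b,b')` encodes `ab|b'`. -/
def forbiddenTriples (E : V → V → Prop) (σ : V → C) : Set (V × V × V) :=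
  {t | σ t.1 ≠ σ t.2.1 ∧ σ t.2.1 = σ t.2.2 ∧ t.2.1 ≠ t.2.2 ∧ E t.1 t.2.1 ∧ E t.1 t.2.2}

/-- The extended triple set `R^bin(G,σ) = R(G,σ) ∪ {bb'|a : ab|b' ∈ F(G,σ)}`. -/
def Rbin (E : V → V → Prop) (σ : V → C) : Set (V × V × V) :=
  informativeTriples E σ ∪ {t | (t.2.2, t.1, t.2.1) ∈ forbiddenTriples E σ}

/-- Properly colored: arcs only between vertices of distinct colors. -/
def ProperlyColored (E : V → V → Prop) (σ : V → C) : Prop :=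
  ∀ x y, E x y → σ x ≠ σ y

/-- sf-colored: properly colored and every vertex has, for each color (of the graph)
different from its own, at least one out-neighbor of that color. -/
def SfColored (E : V → V → Prop) (σ : V → C) : Prop :=
  ProperlyColored E σ ∧ ∀ x y : V, σ y ≠ σ x → ∃ z, E x z ∧ σ z = σ y

/-- A triple set is consistent if some tree displays all of its triples. -/
def Consistent (R : Set (V × V × V)) : Prop :=
  ∃ T : PhyloTree V, T.DisplaysSet R

/-- The closure `cl(R)`: all triples displayed by every tree displaying `R`. -/
def tripleClosure (R : Set (V × V × V)) : Set (V × V × V) :=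
  {t | ∀ T : PhyloTree V, T.DisplaysSet R → T.Displays t.1 t.2.1 t.2.2}

/-- `(T,σ)` is a least resolved tree for `(E,σ)`: it explains `(E,σ)` and no tree
obtained from it by contracting an edge (i.e. by removing a non-root inner cluster)
explains `(E,σ)`. -/
def IsLRT (T : PhyloTree V) (σ : V → C) (E : V → V → Prop) : Prop :=
  Explains T σ E ∧
    ∀ A ∈ T.clusters, A ≠ Set.univ → 1 < A.ncard →
      ∀ T' : PhyloTree V, T'.clusters = T.clusters \ {A} → ¬ Explains T' σ E

end BMG

section Aho

variable {V : Type*}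

/-- Adjacency in the Aho graph `[R,L]`: `x` and `y` are joined whenever `xy|z ∈ R`
for some `z ∈ L` (only triples with all leaves in `L` are taken into account). -/
def ahoAdj (R : Set (V × V × V)) (L : Set V) (x y : V) : Prop :=
  x ∈ L ∧ y ∈ L ∧ ∃ z ∈ L, (x, y, z) ∈ R ∨ (y, x, z) ∈ R

/-- The vertex set of the connected component of `x` in the Aho graph `[R,L]`. -/
def ahoComponent (R : Set (V × V × V)) (L : Set V) (x : V) : Set V :=
  {y | Relation.ReflTransGen (ahoAdj R L) x y}

/-- The clusters of the Aho tree `Aho(R, V)`: the full leaf set, and recursively the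
connected components of the Aho graphs. -/
inductive IsAhoCluster (R : Set (V × V × V)) : Set V → Prop
  | univ : IsAhoCluster R Set.univ
  | component {L : Set V} {x : V} :
      IsAhoCluster R L → x ∈ L → IsAhoCluster R (ahoComponent R L x)

/-- `T` is the Aho tree (`BUILD` tree) of the triple set `R` on the full leaf set. -/
def IsAhoTree (R : Set (V × V × V)) (T : PhyloTree V) : Prop :=
  T.clusters = {A | IsAhoCluster R A}

/-- The union of the leaf sets of the triples in `R`. -/
def tripleLeaves (R : Set (V × V × V)) : Set V :=
  {v | ∃ t ∈ R, v = t.1 ∨ v = t.2.1 ∨ v = t.2.2}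

end Aho

/-! ### The reduction from Exact 3-Cover (X3C)

Given an X3C instance, a set `𝔖` with `|𝔖| = 3t` and a collection `𝒞 = {C_1,…,C_m}`
of 3-element subsets of `𝔖`, set `r = 18t²`, `k = 6r(m−t) + r − 18t` and `q = 3k`.
The constructed 2-colored digraph `(G,σ)` (colors: black = `true`, white = `false`)
has vertex set `S ⊍ (X_1 ⊍ ⋯ ⊍ X_m) ⊍ (Y_1 ⊍ ⋯ ⊍ Y_m)`, where `S` contains a black and
a white copy of each `s ∈ 𝔖`, each `X_i` has `r` black and `r` white vertices and each
`Y_i` has `q` black and `q` white vertices. -/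

/-- The vertex set of the reduction graph. -/
abbrev Vred (SS : Type*) (m r q : ℕ) : Type _ :=
  (SS × Bool) ⊕ ((Fin m × Fin r × Bool) ⊕ (Fin m × Fin q × Bool))

/-- The coloring of the reduction graph (black = `true`, white = `false`). -/
def sigmaRed {SS : Type*} {m r q : ℕ} : Vred SS m r q → Bool
  | Sum.inl (_, c) => c
  | Sum.inr (Sum.inl (_, _, c)) => c
  | Sum.inr (Sum.inr (_, _, c)) => c

/-- The set `S` of vertices of the reduction graph. -/
def Sset {SS : Type*} {m r q : ℕ} : Set (Vred SS m r q) :=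
  Set.range Sum.inl

/-- The set `X_i` of vertices of the reduction graph. -/
def Xset {SS : Type*} {m r q : ℕ} (i : Fin m) : Set (Vred SS m r q) :=
  {v | ∃ p c, v = Sum.inr (Sum.inl (i, p, c))}

/-- The set `Y_i` of vertices of the reduction graph. -/
def Yset {SS : Type*} {m r q : ℕ} (i : Fin m) : Set (Vred SS m r q) :=
  {v | ∃ p c, v = Sum.inr (Sum.inr (i, p, c))}

/-- The arc set of the reduction graph: both arcs between every black and every white
vertex of `S`; all arcs from black to white vertices within each `X_i`; both arcs
between every black and every white vertex within each `Y_i`; all arcs `(x,y)` with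
`x ∈ X_i`, `y ∈ Y_i` of distinct colors; and for each `i` and each `s ∈ C_i` the arcs
`(x, s_b)` for white `x ∈ X_i` and `(x, s_w)` for black `x ∈ X_i`. -/
def Ered {SS : Type*} {m r q : ℕ} (𝒞 : Fin m → Finset SS) :
    Set (Vred SS m r q × Vred SS m r q) :=
  {p | match p with
    | (Sum.inl (_, c), Sum.inl (_, c')) => c ≠ c'
    | (Sum.inr (Sum.inl (i, _, c)), Sum.inr (Sum.inl (i', _, c'))) =>
        i = i' ∧ c = true ∧ c' = false
    | (Sum.inr (Sum.inr (i, _, c)), Sum.inr (Sum.inr (i', _, c'))) => i = i' ∧ c ≠ c'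
    | (Sum.inr (Sum.inl (i, _, c)), Sum.inr (Sum.inr (j, _, c'))) => i = j ∧ c ≠ c'
    | (Sum.inr (Sum.inl (i, _, c)), Sum.inl (s, c')) => s ∈ 𝒞 i ∧ c ≠ c'
    | _ => False}

/-- `r = 18t²`. -/
def rr (t : ℕ) : ℕ := 18 * t ^ 2

/-- `k = 6r(m−t) + r − 18t`. -/
def kk (t m : ℕ) : ℕ := 6 * rr t * (m - t) + rr t - 18 * t

/-- `q = 3·(6r(m−t) + r − 18t)`. -/
def qq (t m : ℕ) : ℕ := 3 * kk t m

/-- The X3C instance `(𝔖, 𝒞)` has an exact 3-cover: a subcollection `𝒞' ⊆ 𝒞` with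
`|𝒞'| = t` whose union is `𝔖`. -/
def HasExact3Cover {SS : Type*} {m : ℕ} (t : ℕ) (𝒞 : Fin m → Finset SS) : Prop :=
  ∃ I : Finset (Fin m), I.card = t ∧ ∀ s : SS, ∃ i ∈ I, s ∈ 𝒞 i

/-! A best match graph is bi-transitive: for alternating colours, a path `x → y → z → w` forces
the arc `x → w`. If `x ∈ X_i` had a best match `x' ∈ X_j` with `i ≠ j`, pick `z ∈ Y_j` of the
colour of `x` such that `F` touches neither `(x', z)` nor any arc leaving `z`; as `|F| ≤ k` and
`q = 3k`, such a `z` exists. Then every `y ∈ Y_j` of the colour of `x'` is reached by the path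
`x → x' → z → y` of `G △ F`, so bi-transitivity puts all `q` arcs `(x, y)` into `G △ F`. None of
them is an arc of `G`, so they all lie in `F`, contradicting `|F| ≤ k < q`. -/

namespace PhyloTree

variable {V : Type*} (T : PhyloTree V)

theorem mem_lca_left (x y : V) : x ∈ T.lca x y :=
  Set.mem_sInter.2 fun _ hA => hA.2.1

theorem mem_lca_right (x y : V) : y ∈ T.lca x y :=
  Set.mem_sInter.2 fun _ hA => hA.2.2

theorem lca_comm (x y : V) : T.lca x y = T.lca y x := by
  simp only [lca, and_comm (a := x ∈ _)]

theorem lca_subset_lca {x y a b : V} (ha : a ∈ T.lca x y) (hb : b ∈ T.lca x y) :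
    T.lca a b ⊆ T.lca x y :=
  Set.sInter_subset_sInter fun A ⟨hA, hxA, hyA⟩ =>
    have hsub : T.lca x y ⊆ A := Set.sInter_subset_of_mem ⟨hA, hxA, hyA⟩
    ⟨hA, hsub ha, hsub hb⟩

end PhyloTree

section BestMatch

variable {V C : Type*} {T : PhyloTree V} {σ : V → C}

theorem bestMatch.mem_lca {x y y' : V} (h : bestMatch T σ x y) (hy' : σ y' = σ y) :
    y ∈ T.lca x y' :=
  h.2 y' hy' (T.mem_lca_right x y)

theorem bestMatch.of_mem_lca {x y y' : V} (h : bestMatch T σ x y) (hy' : σ y' = σ y)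
    (hmem : y' ∈ T.lca x y) : bestMatch T σ x y' :=
  ⟨hy' ▸ h.1, fun w hw =>
    (T.lca_subset_lca (T.mem_lca_left x y) hmem).trans (h.2 w (hw.trans hy'))⟩

variable {E : V → V → Prop}

theorem IsBMG.properlyColored (hE : IsBMG E σ) : ProperlyColored E σ := by
  obtain ⟨T, hT⟩ := hE
  exact fun x y hxy => ((hT x y).1 hxy).1

theorem IsBMG.bitransitive (hE : IsBMG E σ) {x y z w : V} (hxy : E x y) (hyz : E y z)
    (hzw : E z w) (hzx : σ z = σ x) (hwy : σ w = σ y) : E x w := by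
  obtain ⟨T, hT⟩ := hE
  have bxy := (hT x y).1 hxy
  have hz : z ∈ T.lca x y := T.lca_comm x y ▸ ((hT y z).1 hyz).mem_lca hzx.symm
  have hw : w ∈ T.lca z y := ((hT z w).1 hzw).mem_lca hwy.symm
  exact (hT x w).2 <| bxy.of_mem_lca hwy <|
    T.lca_subset_lca hz (T.mem_lca_right x y) hw

end BestMatch

theorem Set.ncard_preimage_le_of_injective {α β : Type*} {f : α → β} (hf : f.Injective)
    {s : Set β} (hs : s.Finite) : (f ⁻¹' s).ncard ≤ s.ncard := by
  rw [← Set.ncard_image_of_injective _ hf]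
  exact Set.ncard_le_ncard (Set.image_preimage_subset f s) hs

theorem exists_untouched_of_two_mul_ncard_lt {α ι : Type*} [Fintype ι] {F : Set (α × α)}
    (hF : F.Finite) (a : α) {g : ι → α} (hg : g.Injective)
    (hcard : 2 * F.ncard < Fintype.card ι) : ∃ i, (a, g i) ∉ F ∧ ∀ b, (g i, b) ∉ F := by
  by_contra! h
  have hcover : Set.univ ⊆ (fun i => (a, g i)) ⁻¹' F ∪ g ⁻¹' (Prod.fst '' F) := by
    intro i _
    by_cases hi : (a, g i) ∈ F
    · exact Or.inl hi
    · obtain ⟨b, hb⟩ := h i hi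
      exact Or.inr ⟨_, hb, rfl⟩
  have hinj : (fun i => (a, g i)).Injective := fun i j hij => hg (Prod.ext_iff.1 hij).2
  have := (Set.ncard_le_ncard hcover).trans (Set.ncard_union_le _ _)
  have := Set.ncard_preimage_le_of_injective hinj hF
  have := (Set.ncard_preimage_le_of_injective hg (hF.image Prod.fst)).trans
    (Set.ncard_image_le hF)
  simp only [Set.ncard_univ, Nat.card_eq_fintype_card] at *
  omega

section Reduction

variable {SS : Type*} {m r q : ℕ}

abbrev xVert (i : Fin m) (p : Fin r) (c : Bool) : Vred SS m r q := Sum.inr (Sum.inl (i, p, c))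

abbrev yVert (i : Fin m) (p : Fin q) (c : Bool) : Vred SS m r q := Sum.inr (Sum.inr (i, p, c))

end Reduction

theorem stmt18_general {SS : Type*} [Fintype SS] (t m : ℕ)
    (𝒞 : Fin m → Finset SS)
    (F : Set (Vred SS m (rr t) (qq t m) × Vred SS m (rr t) (qq t m)))
    (hF : F.ncard ≤ kk t m)
    (hbmg : IsBMG (fun u v => (u, v) ∈ symmDiff (Ered 𝒞) F) sigmaRed) :
    ∀ (i j : Fin m), i ≠ j →
      ∀ x ∈ Xset i, ∀ x' ∈ Xset j, (x, x') ∉ symmDiff (Ered 𝒞) F := by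
  rintro i j hij _ ⟨p, c, rfl⟩ _ ⟨p', c', rfl⟩ hxx'
  have hxx'F : (xVert i p c, xVert j p' c') ∈ F :=
    ((Set.mem_symmDiff.1 hxx').resolve_left fun hE => hij hE.1.1).1
  have hk : 0 < kk t m := ((Set.ncard_pos F.toFinite).2 ⟨_, hxx'F⟩).trans_le hF
  have hqk : qq t m = 3 * kk t m := rfl
  have hc : c ≠ c' := hbmg.properlyColored _ _ hxx'
  obtain ⟨pz, hx'z, hz⟩ := exists_untouched_of_two_mul_ncard_lt F.toFinite (xVert j p' c')
    (g := fun pz : Fin (qq t m) => yVert j pz c) (fun a b hab => by simpa using hab)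
    (by rw [Fintype.card_fin]; omega)
  have hxyF : ∀ py, (xVert i p c, yVert j py c') ∈ F := by
    intro py
    have hxy := hbmg.bitransitive hxx' (z := yVert j pz c) (w := yVert j py c')
      (Set.mem_symmDiff.2 (Or.inl ⟨⟨rfl, hc.symm⟩, hx'z⟩))
      (Set.mem_symmDiff.2 (Or.inl ⟨⟨rfl, hc⟩, hz _⟩)) rfl rfl
    exact ((Set.mem_symmDiff.1 hxy).resolve_left fun hE => hij hE.1.1).1
  have hq : qq t m ≤ F.ncard := by
    set f := fun py : Fin (qq t m) => (xVert i p c, yVert j py c')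
    have h := Set.ncard_preimage_le_of_injective (f := f) (fun a b hab => by simpa [f] using hab)
      F.toFinite
    rwa [Set.eq_univ_of_forall (s := f ⁻¹' F) hxyF, Set.ncard_univ, Nat.card_eq_fintype_card,
      Fintype.card_fin] at h
  omega

/-- Claim: no-insertion-XiXj.
Let `F ⊆ V×V` be a loop-free arc set with `|F| ≤ k` such that `(G△F, σ)` is a BMG.
Then `G△F` contains no arc between a vertex of `X_i` and a vertex of `X_j` for any
`i ≠ j` (in either direction). -/
theorem stmt18 {SS : Type*} [Fintype SS] [DecidableEq SS] (t m : ℕ)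
    (hcard : Fintype.card SS = 3 * t)
    (𝒞 : Fin m → Finset SS) (h𝒞 : ∀ i, (𝒞 i).card = 3)
    (F : Set (Vred SS m (rr t) (qq t m) × Vred SS m (rr t) (qq t m)))
    (hloop : ∀ v, (v, v) ∉ F) (hF : F.ncard ≤ kk t m)
    (hbmg : IsBMG (fun u v => (u, v) ∈ symmDiff (Ered 𝒞) F) sigmaRed) :
    ∀ (i j : Fin m), i ≠ j →
      ∀ x ∈ Xset i, ∀ x' ∈ Xset j, (x, x') ∉ symmDiff (Ered 𝒞) F :=
  stmt18_general t m 𝒞 F hF hbmg
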